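/- Generic reducibility is transitive: if C ≥_g B and B ≥_g A, then C ≥_g A. -/

import Mathlib

open Filter Topology

/-- `A ⊆ ℕ` has density 1 if the densities of its initial segments tend to 1. -/
def Density1 (A : Set ℕ) : Prop :=
  Tendsto (fun n : ℕ => ((A ∩ Set.Iio n).ncard : ℝ) / n) atTop (𝓝 1)

/-- The length-`k` initial segment of an oracle `X : ℕ → ℕ`. -/
def oracleSeg (X : ℕ → ℕ) (k : ℕ) : List ℕ := List.ofFn (fun i : Fin k => X i)

/-- A Turing functional, presented by a partial computable, monotone map on
finite oracle strings (the "use" presentation). -/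
structure TuringFunctional where
  f : List ℕ → ℕ →. ℕ
  computable : Partrec₂ f
  mono : ∀ σ τ : List ℕ, σ <+: τ → ∀ n m, m ∈ f σ n → m ∈ f τ n

/-- Evaluation of a Turing functional on a total oracle `X : ℕ → ℕ`. -/
noncomputable def TuringFunctional.eval (φ : TuringFunctional) (X : ℕ → ℕ) (n : ℕ) :
    Part ℕ :=
  ⟨∃ k, ((φ.f (oracleSeg X k) n).Dom),
   fun h => (φ.f (oracleSeg X h.choose) n).get h.choose_spec⟩

open Classical in
/-- The characteristic function of a set of naturals. -/
noncomputable def setChar (A : Set ℕ) : ℕ → ℕ := fun n => if n ∈ A then 1 else 0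

/-- Evaluation of a Turing functional with a set of naturals as (total) oracle. -/
noncomputable def TuringFunctional.evalSet (φ : TuringFunctional) (O : Set ℕ) : ℕ →. ℕ :=
  fun n => φ.eval (setChar O) n

/-- A partial function is a generic computation of `A` if its domain has density 1,
its values lie in `{0,1}`, and it is correct about `A` wherever it halts. -/
def IsGenericComputation (f : ℕ →. ℕ) (A : Set ℕ) : Prop :=
  Density1 f.Dom ∧ ∀ n m, m ∈ f n → (n ∈ A ∧ m = 1) ∨ (n ∉ A ∧ m = 0)

/-- A (time-dependent) partial oracle for `A`: a set of coded triples `⟨n,x,l⟩`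
which never lies about membership in `A`. -/
def IsPartialOracle (O A : Set ℕ) : Prop :=
  (∀ n l, Nat.pair n (Nat.pair 0 l) ∈ O → n ∉ A) ∧
  (∀ n l, Nat.pair n (Nat.pair 1 l) ∈ O → n ∈ A)

/-- The domain of a partial oracle. -/
def oracleDomain (O : Set ℕ) : Set ℕ :=
  {n | ∃ x l, Nat.pair n (Nat.pair x l) ∈ O}

/-- A generic oracle for `A` is a partial oracle for `A` with density-1 domain. -/
def IsGenericOracle (O A : Set ℕ) : Prop :=
  IsPartialOracle O A ∧ Density1 (oracleDomain O)

/-- `A` is (uniformly) generically reducible to `B`:  `B ≥_g A`. -/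
def GenRedTo (A B : Set ℕ) : Prop :=
  ∃ φ : TuringFunctional, ∀ O : Set ℕ, IsGenericOracle O B →
    IsGenericComputation (φ.evalSet O) A

/-- Generic equivalence `A ≡_g B`. -/
def GenEquiv (A B : Set ℕ) : Prop := GenRedTo A B ∧ GenRedTo B A

/-- `B` generically computes `A`. -/
def GenericallyComputes (B A : Set ℕ) : Prop :=
  ∃ φ : TuringFunctional, IsGenericComputation (φ.evalSet B) A

/-- `A` is generically computable. -/
def GenericallyComputable (A : Set ℕ) : Prop :=
  ∃ f : ℕ →. ℕ, Partrec f ∧ IsGenericComputation f A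

/-- Turing reducibility `A ≤_T B` for sets of naturals. -/
def TuringRedTo (A B : Set ℕ) : Prop :=
  ∃ φ : TuringFunctional, ∀ n, φ.evalSet B n = Part.some (setChar A n)

/-- The embedding `X ↦ R(X)` of Turing degrees into generic degrees. -/
def RSet (X : Set ℕ) : Set ℕ := {n | ∃ m k, m ∈ X ∧ Odd k ∧ n = 2 ^ m * k}

/-- The recursive join of two sets. -/
def setJoin (A B : Set ℕ) : Set ℕ :=
  {n | (∃ k, n = 2 * k ∧ k ∈ A) ∨ (∃ k, n = 2 * k + 1 ∧ k ∈ B)}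

/-!
Let `φ` witness `C ≥_g B` and `ψ` witness `B ≥_g A`. Run on a generic oracle for `C`, `φ`
enumerates a partial oracle for `B`: the record `⟨n, x, ⟨k, s⟩⟩` is put in whenever `φ` outputs
`x` on input `n` within `s` steps, reading only the first `k` oracle bits. These records are
correct because `φ`'s outputs are, and their domain is the halting set of `φ`, which has
density 1. Whether record `m` is present depends only on the first `m` bits of the oracle for
`C`, so the initial segments of the new oracle are computed from those of the old one by a
monotone computable string map; precomposing `ψ` with that map gives one functional
witnessing `C ≥_g A`.
-/

open Nat.Partrec (Code)
open Nat.Partrec.Code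

lemma oracleSeg_eq_map (X : ℕ → ℕ) (k : ℕ) : oracleSeg X k = (List.range k).map X := by
  apply List.ext_getElem <;> simp [oracleSeg]

lemma oracleSeg_length (X : ℕ → ℕ) (k : ℕ) : (oracleSeg X k).length = k := by
  simp [oracleSeg]

lemma oracleSeg_take (X : ℕ → ℕ) {k K : ℕ} (h : k ≤ K) :
    (oracleSeg X K).take k = oracleSeg X k := by
  rw [oracleSeg_eq_map, oracleSeg_eq_map, ← List.map_take, List.take_range, min_eq_left h]

lemma oracleSeg_prefix (X : ℕ → ℕ) {k K : ℕ} (h : k ≤ K) : oracleSeg X k <+: oracleSeg X K :=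
  oracleSeg_take X h ▸ List.take_prefix _ _

lemma exists_code_eval_pair {α : Type*} [Primcodable α] {f : α → ℕ →. ℕ} (hf : Partrec₂ f) :
    ∃ c : Code, ∀ a n, eval c (Nat.pair (Encodable.encode a) n) = f a n := by
  obtain ⟨c, hc⟩ := exists_code.1 hf
  refine ⟨c, fun a n => ?_⟩
  have hpair : Nat.pair (Encodable.encode a) n = Encodable.encode (a, n) := by
    simp [Encodable.encode_prod_val]
  rw [hpair, hc]
  simp [Encodable.encodek, Part.map_id' Encodable.encode_nat]

namespace TuringFunctional

lemma mem_eval {φ : TuringFunctional} {X : ℕ → ℕ} {n m : ℕ} :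
    m ∈ φ.eval X n ↔ ∃ k, m ∈ φ.f (oracleSeg X k) n := by
  constructor
  · rintro ⟨h, rfl⟩
    exact ⟨h.choose, h.choose_spec, rfl⟩
  · rintro ⟨k, hk⟩
    have hdom : ∃ j, (φ.f (oracleSeg X j) n).Dom := ⟨k, hk.fst⟩
    refine ⟨hdom, Part.mem_unique (o := φ.f (oracleSeg X (max hdom.choose k)) n) ?_ ?_⟩
    · exact φ.mono _ _ (oracleSeg_prefix X (le_max_left hdom.choose k)) n _ (Part.get_mem _)
    · exact φ.mono _ _ (oracleSeg_prefix X (le_max_right hdom.choose k)) n m hk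

def precomp (ψ : TuringFunctional) (T : List ℕ → List ℕ) (hT : Computable T)
    (hT_mono : ∀ σ τ, σ <+: τ → T σ <+: T τ) : TuringFunctional where
  f σ n := ψ.f (T σ) n
  computable := ψ.computable.comp (hT.comp Computable.fst) Computable.snd
  mono σ τ h := ψ.mono _ _ (hT_mono σ τ h)

lemma eval_precomp (ψ : TuringFunctional) {T : List ℕ → List ℕ} (hT : Computable T)
    (hT_mono : ∀ σ τ, σ <+: τ → T σ <+: T τ) {X Y : ℕ → ℕ}
    (hXY : ∀ k, T (oracleSeg X k) = oracleSeg Y k) :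
    (ψ.precomp T hT hT_mono).eval X = ψ.eval Y := by
  funext n
  ext m
  simp only [mem_eval, precomp, hXY]

end TuringFunctional

lemma isGenericOracle_of_exists_mem_iff {O B : Set ℕ} {f : ℕ →. ℕ}
    (hO : ∀ n x, (∃ l, Nat.pair n (Nat.pair x l) ∈ O) ↔ x ∈ f n)
    (hf : IsGenericComputation f B) : IsGenericOracle O B := by
  refine ⟨⟨fun n l h => ?_, fun n l h => ?_⟩, ?_⟩
  · rcases hf.2 n 0 ((hO n 0).1 ⟨l, h⟩) with ⟨-, h⟩ | ⟨hn, -⟩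
    exacts [absurd h zero_ne_one, hn]
  · rcases hf.2 n 1 ((hO n 1).1 ⟨l, h⟩) with ⟨hn, -⟩ | ⟨-, h⟩
    exacts [hn, absurd h one_ne_zero]
  · have hdom : oracleDomain O = f.Dom := by
      ext n
      simp only [oracleDomain, hO, PFun.dom_eq]
    exact hdom ▸ hf.1

section BitOracle

variable (b : List ℕ → ℕ → Bool)

def bitOracle (X : ℕ → ℕ) : Set ℕ := {m | b (oracleSeg X m) m}

def bitSeg (σ : List ℕ) : List ℕ := (List.range σ.length).map fun m => (b σ m).toNat

variable {b}

lemma bitSeg_prefix (hb : ∀ σ m, b (σ.take m) m = b σ m) {σ τ : List ℕ} (h : σ <+: τ) :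
    bitSeg b σ <+: bitSeg b τ := by
  have hbit : ∀ m < σ.length, b σ m = b τ m := fun m hm => by
    rw [← hb σ, ← hb τ, List.prefix_iff_eq_take.1 h, List.take_take, min_eq_left hm.le]
  have heq : bitSeg b σ = (bitSeg b τ).take σ.length := by
    rw [bitSeg, bitSeg, ← List.map_take, List.take_range, min_eq_left h.length_le]
    exact List.map_congr_left fun m hm => by rw [hbit m (List.mem_range.1 hm)]
  exact heq ▸ List.take_prefix _ _

lemma bitSeg_oracleSeg (hb : ∀ σ m, b (σ.take m) m = b σ m) (X : ℕ → ℕ) (K : ℕ) :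
    bitSeg b (oracleSeg X K) = oracleSeg (setChar (bitOracle b X)) K := by
  rw [bitSeg, oracleSeg_eq_map (setChar _), oracleSeg_length]
  refine List.map_congr_left fun m hm => ?_
  rw [← hb, oracleSeg_take X (List.mem_range.1 hm).le]
  cases h : b (oracleSeg X m) m <;> simp [setChar, bitOracle, h]

lemma bitSeg_computable (hb : Primrec₂ b) : Computable (bitSeg b) :=
  (Primrec.list_map (Primrec.list_range.comp Primrec.list_length)
    (show Primrec₂ fun σ m => (b σ m).toNat from
      Primrec.cond hb (Primrec.const 1) (Primrec.const 0))).to_comp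

end BitOracle

/-- `m` codes `⟨n, x, ⟨k, s⟩⟩`: the bit says whether `c`, run on input `n` with the first `k`
entries of `σ` as oracle string, outputs `x` within `s` steps. -/
def traceBit (c : Code) (σ : List ℕ) (m : ℕ) : Bool :=
  evaln m.unpair.2.unpair.2.unpair.2 c
      (Nat.pair (Encodable.encode (σ.take m.unpair.2.unpair.2.unpair.1)) m.unpair.1) =
    some m.unpair.2.unpair.1

lemma traceBit_take (c : Code) (σ : List ℕ) (m : ℕ) :
    traceBit c (σ.take m) m = traceBit c σ m := by
  have hk : m.unpair.2.unpair.2.unpair.1 ≤ m :=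
    (Nat.unpair_left_le _).trans ((Nat.unpair_right_le _).trans (Nat.unpair_right_le _))
  rw [traceBit, traceBit, List.take_take, min_eq_left hk]

lemma traceBit_primrec (c : Code) : Primrec₂ (traceBit c) := by
  have h1 : Primrec fun p : List ℕ × ℕ => p.2.unpair := Primrec.unpair.comp Primrec.snd
  have h2 : Primrec fun p : List ℕ × ℕ => p.2.unpair.2.unpair :=
    Primrec.unpair.comp (Primrec.snd.comp h1)
  have h3 : Primrec fun p : List ℕ × ℕ => p.2.unpair.2.unpair.2.unpair :=
    Primrec.unpair.comp (Primrec.snd.comp h2)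
  have hinput : Primrec fun p : List ℕ × ℕ =>
      Nat.pair (Encodable.encode (p.1.take p.2.unpair.2.unpair.2.unpair.1)) p.2.unpair.1 :=
    Primrec₂.natPair.comp
      (Primrec.encode.comp (Primrec.list_take.comp (Primrec.fst.comp h3) Primrec.fst))
      (Primrec.fst.comp h1)
  have heval := primrec_evaln.comp (((Primrec.snd.comp h3).pair (Primrec.const c)).pair hinput)
  exact PrimrecPred.decide (Primrec.eq.comp heval (Primrec.option_some.comp (Primrec.fst.comp h2)))

lemma mem_bitOracle_traceBit {c : Code} {X : ℕ → ℕ} {n x k s : ℕ} :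
    Nat.pair n (Nat.pair x (Nat.pair k s)) ∈ bitOracle (traceBit c) X ↔
      evaln s c (Nat.pair (Encodable.encode (oracleSeg X k)) n) = some x := by
  have hk : k ≤ Nat.pair n (Nat.pair x (Nat.pair k s)) :=
    (Nat.left_le_pair k s).trans ((Nat.right_le_pair x _).trans (Nat.right_le_pair n _))
  simp [bitOracle, traceBit, oracleSeg_take X hk]

lemma exists_mem_bitOracle_traceBit_iff {φ : TuringFunctional} {c : Code}
    (hc : ∀ σ n, eval c (Nat.pair (Encodable.encode σ) n) = φ.f σ n) {X : ℕ → ℕ} {n x : ℕ} :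
    (∃ l, Nat.pair n (Nat.pair x l) ∈ bitOracle (traceBit c) X) ↔ x ∈ φ.eval X n := by
  simp only [TuringFunctional.mem_eval, ← hc, evaln_complete, Option.mem_def]
  constructor
  · rintro ⟨l, hl⟩
    rw [← Nat.pair_unpair l, mem_bitOracle_traceBit] at hl
    exact ⟨_, _, hl⟩
  · rintro ⟨k, s, hks⟩
    exact ⟨Nat.pair k s, mem_bitOracle_traceBit.2 hks⟩

/-- generic reducibility is transitive. -/
theorem genRedTo_trans (A B C : Set ℕ) (hBC : GenRedTo B C) (hAB : GenRedTo A B) :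
    GenRedTo A C := by
  obtain ⟨φ, hφ⟩ := hBC
  obtain ⟨ψ, hψ⟩ := hAB
  obtain ⟨c, hc⟩ := exists_code_eval_pair φ.computable
  have hT_mono : ∀ σ τ, σ <+: τ → bitSeg (traceBit c) σ <+: bitSeg (traceBit c) τ :=
    fun _ _ => bitSeg_prefix (traceBit_take c)
  have hT := bitSeg_computable (traceBit_primrec c)
  refine ⟨ψ.precomp _ hT hT_mono, fun O hO => ?_⟩
  have hgen : IsGenericOracle (bitOracle (traceBit c) (setChar O)) B :=
    isGenericOracle_of_exists_mem_iff (fun _ _ => exists_mem_bitOracle_traceBit_iff hc) (hφ O hO)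
  have heval : (ψ.precomp _ hT hT_mono).evalSet O =
      ψ.evalSet (bitOracle (traceBit c) (setChar O)) :=
    ψ.eval_precomp hT hT_mono (bitSeg_oracleSeg (traceBit_take c) (setChar O))
  exact heval ▸ hψ _ hgen
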